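/- Let I : H¹(ℝ^N) → ℝ be a C¹ functional, c > 0, and m(λ) = inf{ I(u) : ‖u‖₂² = λ }. Suppose λ ↦ m(λ) is non-increasing on (0, ∞). If v ∈ H¹(ℝ^N) minimizes I on the constraint ‖v‖₂² = c and satisfies the Euler–Lagrange equation I'(v) = β ⟨v, ·⟩_{L²} for some β ∈ ℝ (so that β = I'(v)v / ‖v‖₂²), then β ≤ 0. -/

import Mathlib

open Filter RealInnerProductSpace

/-!
A minimizer `v` at mass `c` also minimizes `I` on the whole region `0 < ‖u‖² ≤ c`, because
`m` is non-increasing. The direction `-v` points into that region, so by Fermat's rule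
`0 ≤ I'(v)(-v) = -β c`.
-/

open Set

theorem isMinOn_Ioc_of_antitoneOn {X : Type*} {I q : X → ℝ} {m : ℝ → ℝ}
    (hm : ∀ lam : ℝ, 0 < lam → m lam ∈ lowerBounds (I '' {u | q u = lam}))
    (hmono : AntitoneOn m (Ioi 0)) {v : X} (hmin : I v = m (q v)) :
    IsMinOn I {u | q u ∈ Ioc 0 (q v)} v := by
  rintro u ⟨hu_pos, hu_le⟩
  calc I v = m (q v) := hmin
    _ ≤ m (q u) := hmono hu_pos (hu_pos.trans_le hu_le) hu_le
    _ ≤ I u := hm (q u) hu_pos ⟨u, rfl, rfl⟩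

theorem neg_mem_posTangentConeAt_norm_sq_Ioc {E : Type*} [NormedAddCommGroup E]
    [NormedSpace ℝ E] {v : E} (hv : v ≠ 0) :
    -v ∈ posTangentConeAt {u : E | ‖u‖ ^ 2 ∈ Ioc 0 (‖v‖ ^ 2)} v := by
  refine mem_posTangentConeAt_of_frequently_mem (Eventually.frequently ?_)
  filter_upwards [Ioo_mem_nhdsGT (zero_lt_one' ℝ)] with t ⟨ht0, ht1⟩
  have hscale : ‖v + t • -v‖ ^ 2 = (1 - t) ^ 2 * ‖v‖ ^ 2 := by
    have hline : v + t • -v = (1 - t) • v := by rw [sub_smul, one_smul, smul_neg, sub_eq_add_neg]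
    rw [hline, norm_smul, mul_pow, Real.norm_eq_abs, sq_abs]
  have hv_pos : 0 < ‖v‖ ^ 2 := by positivity
  rw [hscale]
  constructor
  · exact mul_pos (by nlinarith) hv_pos
  · exact mul_le_of_le_one_left hv_pos.le (by nlinarith)

/-- Sign of the Lagrange multiplier: for a `C¹` functional `I` with
`m(λ) = inf {I(u) : ‖u‖₂² = λ}` non-increasing on `(0,∞)`, any minimizer `v` of
`I` on the constraint `‖v‖₂² = c` satisfying `I'(v) = β ⟨v,·⟩` has `β ≤ 0`.
(The Sobolev space `H¹(ℝ^N)` is modelled abstractly by a real Hilbert space.) -/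
theorem stmt_16 {H : Type*} [NormedAddCommGroup H] [InnerProductSpace ℝ H]
    (I : H → ℝ) (hI : ContDiff ℝ 1 I)
    (m : ℝ → ℝ)
    (hm : ∀ lam : ℝ, 0 < lam → IsGLB (I '' {u : H | ‖u‖ ^ 2 = lam}) (m lam))
    (hmono : AntitoneOn m (Set.Ioi (0:ℝ)))
    (c : ℝ) (hc : 0 < c)
    (v : H) (hv : ‖v‖ ^ 2 = c) (hmin : I v = m c)
    (β : ℝ) (hEL : ∀ w : H, fderiv ℝ I v w = β * ⟪v, w⟫) :
    β ≤ 0 := by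
  subst hv
  have hv0 : v ≠ 0 := by
    rintro rfl
    simp at hc
  have hlocal : IsLocalMinOn I {u | ‖u‖ ^ 2 ∈ Ioc 0 (‖v‖ ^ 2)} v :=
    (isMinOn_Ioc_of_antitoneOn (fun lam hlam => (hm lam hlam).1) hmono hmin).localize
  have hderiv : HasFDerivAt I (fderiv ℝ I v) v :=
    (hI.differentiable one_ne_zero v).hasFDerivAt
  have hfermat := hlocal.hasFDerivWithinAt_nonneg hderiv.hasFDerivWithinAt
    (neg_mem_posTangentConeAt_norm_sq_Ioc hv0)
  rw [hEL, inner_neg_right, real_inner_self_eq_norm_sq] at hfermat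
  nlinarith
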